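/- arXiv:math/0303224 — 2 statements merged into one kernel-verified Lean document; each statement's English description precedes it below -/
import Mathlib

section
/- Let V₁, V₂ > 0 and suppose real numbers a'₁, a'₂ satisfy (a'₁)² V₁ + (a'₂)² V₂ = 1 + O(ε) and a'₁ V₁ + a'₂ V₂ = O(√ε) as ε → 0. Then, up to a common sign, a'₁ = a₁ + O(√ε) and a'₂ = a₂ + O(√ε), where a₁ = (1/V₁)√(V₁V₂/(V₁+V₂)) and a₂ = −(1/V₂)√(V₁V₂/(V₁+V₂)). -/
/-!
For `L = b₁V₁ + b₂V₂` and `Q = b₁²V₁ + b₂²V₂`, Lagrange's identity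
`(V₁ + V₂) Q = L² + V₁V₂ (b₁ - b₂)²` pins `(b₁ - b₂)²` down to within `O(ε)` of its value
`(a₁ - a₂)²` at an exact solution, hence `b₁ - b₂` to within `O(ε)` of `±(a₁ - a₂)`, as
`a₁ - a₂ ≠ 0`. Then `(b₁, b₂)` is recovered linearly from `L` and `b₁ - b₂`, and `L = O(√ε)`
gives the `O(√ε)` error.
-/

lemma abs_sub_mul_abs_le_or_abs_add_mul_abs_le (x r : ℝ) :
    |x - r| * |r| ≤ |x ^ 2 - r ^ 2| ∨ |x + r| * |r| ≤ |x ^ 2 - r ^ 2| := by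
  have hfactor : |x ^ 2 - r ^ 2| = |x - r| * |x + r| := by rw [← abs_mul]; ring_nf
  rw [hfactor]
  rcases le_total 0 (x * r) with h | h
  · refine .inl (mul_le_mul_of_nonneg_left ?_ (abs_nonneg _))
    exact sq_le_sq.mp (by nlinarith [sq_nonneg x])
  · refine .inr ((mul_le_mul_of_nonneg_left ?_ (abs_nonneg _)).trans_eq (mul_comm _ _))
    exact sq_le_sq.mp (by nlinarith [sq_nonneg x])

lemma abs_add_mul_div_le {l e w W κ δ : ℝ} (hw : 0 ≤ w) (hwW : w ≤ W) (hW : 0 < W)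
    (hl : |l| ≤ κ) (he : |e| ≤ δ) : |(l + w * e) / W| ≤ κ / W + δ := by
  have hδ : 0 ≤ δ := (abs_nonneg e).trans he
  calc |(l + w * e) / W| = |l + w * e| / W := by rw [abs_div, abs_of_pos hW]
    _ ≤ (|l| + w * |e|) / W := by
        gcongr
        exact (abs_add_le _ _).trans_eq (by rw [abs_mul, abs_of_nonneg hw])
    _ ≤ (κ + W * δ) / W := by gcongr
    _ = κ / W + δ := by field_simp

section ExactSystem

variable {V₁ V₂ a₁ a₂ : ℝ}

lemma mul_sq_sub_eq_of_exact (hQ : a₁ ^ 2 * V₁ + a₂ ^ 2 * V₂ = 1) (hL : a₁ * V₁ + a₂ * V₂ = 0)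
    (b₁ b₂ : ℝ) :
    V₁ * V₂ * ((b₁ - b₂) ^ 2 - (a₁ - a₂) ^ 2) =
      (V₁ + V₂) * (b₁ ^ 2 * V₁ + b₂ ^ 2 * V₂ - 1) - (b₁ * V₁ + b₂ * V₂) ^ 2 := by
  linear_combination (-(V₁ + V₂)) * hQ + (a₁ * V₁ + a₂ * V₂) * hL

lemma sub_eq_of_exact (hV : V₁ + V₂ ≠ 0) (hL : a₁ * V₁ + a₂ * V₂ = 0) (b₁ b₂ : ℝ) :
    b₁ - a₁ = (b₁ * V₁ + b₂ * V₂ + V₂ * ((b₁ - b₂) - (a₁ - a₂))) / (V₁ + V₂) ∧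
      b₂ - a₂ = (b₁ * V₁ + b₂ * V₂ + V₁ * -((b₁ - b₂) - (a₁ - a₂))) / (V₁ + V₂) := by
  constructor <;> rw [eq_div_iff hV] <;> linear_combination (-1 : ℝ) * hL

lemma abs_sub_le_of_exact (h₁ : 0 < V₁) (h₂ : 0 < V₂) (hL : a₁ * V₁ + a₂ * V₂ = 0)
    {b₁ b₂ κ δ : ℝ} (hLb : |b₁ * V₁ + b₂ * V₂| ≤ κ) (hd : |(b₁ - b₂) - (a₁ - a₂)| ≤ δ) :
    |b₁ - a₁| ≤ κ / (V₁ + V₂) + δ ∧ |b₂ - a₂| ≤ κ / (V₁ + V₂) + δ := by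
  have hV : 0 < V₁ + V₂ := add_pos h₁ h₂
  obtain ⟨hb₁, hb₂⟩ := sub_eq_of_exact hV.ne' hL b₁ b₂
  rw [hb₁, hb₂]
  exact ⟨abs_add_mul_div_le h₂.le (by linarith) hV hLb hd,
    abs_add_mul_div_le h₁.le (by linarith) hV hLb (by rwa [abs_neg])⟩

lemma abs_sq_sub_sq_le_of_exact (h₁ : 0 < V₁) (h₂ : 0 < V₂)
    (hQ : a₁ ^ 2 * V₁ + a₂ ^ 2 * V₂ = 1) (hL : a₁ * V₁ + a₂ * V₂ = 0) {b₁ b₂ η κ : ℝ}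
    (hQb : |b₁ ^ 2 * V₁ + b₂ ^ 2 * V₂ - 1| ≤ η) (hLb : |b₁ * V₁ + b₂ * V₂| ≤ κ) :
    V₁ * V₂ * |(b₁ - b₂) ^ 2 - (a₁ - a₂) ^ 2| ≤ (V₁ + V₂) * η + κ ^ 2 := by
  have hP : 0 < V₁ * V₂ := mul_pos h₁ h₂
  rw [← abs_of_pos hP, ← abs_mul, mul_sq_sub_eq_of_exact hQ hL]
  calc _ ≤ |(V₁ + V₂) * (b₁ ^ 2 * V₁ + b₂ ^ 2 * V₂ - 1)| + |(b₁ * V₁ + b₂ * V₂) ^ 2| :=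
        abs_sub _ _
    _ ≤ (V₁ + V₂) * η + κ ^ 2 := by
        rw [abs_mul, abs_of_pos (add_pos h₁ h₂), abs_pow]
        gcongr

lemma sub_ne_zero_of_exact (h₁ : 0 < V₁) (h₂ : 0 < V₂)
    (hQ : a₁ ^ 2 * V₁ + a₂ ^ 2 * V₂ = 1) (hL : a₁ * V₁ + a₂ * V₂ = 0) : a₁ - a₂ ≠ 0 := by
  intro h
  have := mul_sq_sub_eq_of_exact hQ hL 0 0
  rw [h] at this
  linarith

theorem abs_sub_le_or_abs_add_le_of_exact (h₁ : 0 < V₁) (h₂ : 0 < V₂)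
    (hQ : a₁ ^ 2 * V₁ + a₂ ^ 2 * V₂ = 1) (hL : a₁ * V₁ + a₂ * V₂ = 0) {b₁ b₂ η κ δ : ℝ}
    (hQb : |b₁ ^ 2 * V₁ + b₂ ^ 2 * V₂ - 1| ≤ η) (hLb : |b₁ * V₁ + b₂ * V₂| ≤ κ)
    (hδ : (V₁ + V₂) * η + κ ^ 2 ≤ V₁ * V₂ * |a₁ - a₂| * δ) :
    (|b₁ - a₁| ≤ κ / (V₁ + V₂) + δ ∧ |b₂ - a₂| ≤ κ / (V₁ + V₂) + δ) ∨
      (|b₁ + a₁| ≤ κ / (V₁ + V₂) + δ ∧ |b₂ + a₂| ≤ κ / (V₁ + V₂) + δ) := by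
  have hP : 0 < V₁ * V₂ := mul_pos h₁ h₂
  have hr : 0 < |a₁ - a₂| := abs_pos.mpr (sub_ne_zero_of_exact h₁ h₂ hQ hL)
  have hsq := abs_sq_sub_sq_le_of_exact h₁ h₂ hQ hL hQb hLb
  have hclose : ∀ y, |y| * |a₁ - a₂| ≤ |(b₁ - b₂) ^ 2 - (a₁ - a₂) ^ 2| → |y| ≤ δ := by
    intro y hy
    refine le_of_mul_le_mul_left ?_ (mul_pos hP hr)
    nlinarith
  rcases abs_sub_mul_abs_le_or_abs_add_mul_abs_le (b₁ - b₂) (a₁ - a₂) with h | h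
  · exact .inl (abs_sub_le_of_exact h₁ h₂ hL hLb (hclose _ h))
  · have hL' : -a₁ * V₁ + -a₂ * V₂ = 0 := by linear_combination -hL
    have hd : |(b₁ - b₂) - (-a₁ - -a₂)| ≤ δ := by
      rw [show (b₁ - b₂) - (-a₁ - -a₂) = (b₁ - b₂) + (a₁ - a₂) by ring]
      exact hclose _ h
    have := abs_sub_le_of_exact h₁ h₂ hL' hLb hd
    rw [sub_neg_eq_add, sub_neg_eq_add] at this
    exact .inr this

end ExactSystem

lemma exact_system_of_sq_eq {V₁ V₂ s : ℝ} (h₁ : 0 < V₁) (h₂ : 0 < V₂)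
    (hs : s ^ 2 = V₁ * V₂ / (V₁ + V₂)) :
    ((1 / V₁) * s) ^ 2 * V₁ + (-(1 / V₂) * s) ^ 2 * V₂ = 1 ∧
      (1 / V₁) * s * V₁ + -(1 / V₂) * s * V₂ = 0 := by
  constructor
  · field_simp
    rw [hs]
    field_simp
    ring
  · field_simp
    ring

/-- Stability of the eigenfunction-coefficient system: if
`(a'₁)²V₁ + (a'₂)²V₂ = 1 + O(ε)` and `a'₁V₁ + a'₂V₂ = O(√ε)`, then up to a
common sign `a'ᵢ = aᵢ + O(√ε)`, where
`a₁ = (1/V₁)√(V₁V₂/(V₁+V₂))`, `a₂ = −(1/V₂)√(V₁V₂/(V₁+V₂))`. -/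
theorem stmt_4 (V₁ V₂ K : ℝ) (h₁ : 0 < V₁) (h₂ : 0 < V₂) (hK : 0 < K) :
    ∃ C ε₀ : ℝ, 0 < C ∧ 0 < ε₀ ∧
      ∀ ε : ℝ, 0 < ε → ε ≤ ε₀ →
        ∀ a₁' a₂' : ℝ,
          |a₁' ^ 2 * V₁ + a₂' ^ 2 * V₂ - 1| ≤ K * ε →
          |a₁' * V₁ + a₂' * V₂| ≤ K * Real.sqrt ε →
          ((|a₁' - (1 / V₁) * Real.sqrt (V₁ * V₂ / (V₁ + V₂))| ≤ C * Real.sqrt ε ∧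
            |a₂' - (-(1 / V₂) * Real.sqrt (V₁ * V₂ / (V₁ + V₂)))| ≤ C * Real.sqrt ε) ∨
           (|a₁' + (1 / V₁) * Real.sqrt (V₁ * V₂ / (V₁ + V₂))| ≤ C * Real.sqrt ε ∧
            |a₂' + (-(1 / V₂) * Real.sqrt (V₁ * V₂ / (V₁ + V₂)))| ≤ C * Real.sqrt ε)) := by
  obtain ⟨hQ, hL⟩ := exact_system_of_sq_eq h₁ h₂ (Real.sq_sqrt (by positivity))
  set a₁ := (1 / V₁) * Real.sqrt (V₁ * V₂ / (V₁ + V₂))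
  set a₂ := -(1 / V₂) * Real.sqrt (V₁ * V₂ / (V₁ + V₂))
  have hr : 0 < |a₁ - a₂| := abs_pos.mpr (sub_ne_zero_of_exact h₁ h₂ hQ hL)
  set c := ((V₁ + V₂) * K + K ^ 2) / (V₁ * V₂ * |a₁ - a₂|)
  have hc : V₁ * V₂ * |a₁ - a₂| * c = (V₁ + V₂) * K + K ^ 2 := mul_div_cancel₀ _ (by positivity)
  refine ⟨K / (V₁ + V₂) + c, 1, by positivity, one_pos, fun ε hε hε₁ b₁ b₂ hQb hLb ↦ ?_⟩
  have hε_le : ε ≤ Real.sqrt ε := Real.le_sqrt_of_sq_le (by nlinarith)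
  have hδ : (V₁ + V₂) * (K * ε) + (K * Real.sqrt ε) ^ 2 ≤
      V₁ * V₂ * |a₁ - a₂| * (c * Real.sqrt ε) := by
    calc (V₁ + V₂) * (K * ε) + (K * Real.sqrt ε) ^ 2 = ((V₁ + V₂) * K + K ^ 2) * ε := by
          rw [mul_pow, Real.sq_sqrt hε.le]; ring
      _ ≤ ((V₁ + V₂) * K + K ^ 2) * Real.sqrt ε := by gcongr
      _ = V₁ * V₂ * |a₁ - a₂| * (c * Real.sqrt ε) := by rw [← mul_assoc, hc]
  rw [add_mul, div_mul_eq_mul_div]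
  exact abs_sub_le_or_abs_add_le_of_exact h₁ h₂ hQ hL hQb hLb hδ
end

section
/- Quantitative inverse function theorem: Let F : B → B' be a C¹ map between Banach spaces such that DF(0) is an isomorphism with ‖DF(0)x‖ ≥ (1/C_I)‖x‖ for all x, and such that ‖DF(0)x − DF(y)x‖ ≤ C_N ‖x‖·‖y‖ for all x and all y with ‖y‖ < r₁. Then for r ≤ min(r₁, (2 C_I C_N)⁻¹), the ball B_{r/2C_I}(F(0)) is contained in F(B_r(0)). In particular, if additionally ‖F(0)‖ < r/(2C_I), then there exists y with ‖y‖ < r and F(y) = 0. -/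
/-!
The map `f` stays within `K ε` of its linearization `e` on the closed ball of radius `ε` about
`a`, so by the mean value inequality it approximates `e` there with constant `K ε`. Since
`‖e⁻¹‖ ≤ C`, Newton-type iteration with `e⁻¹` reaches every point within `(C⁻¹ - K ε) ε` of
`f a`. Choosing `ε = 2 C ‖z - f a‖` and using `2 C K r ≤ 1` shows that every `z` within
`r / (2 C)` of `f a` is hit from the ball of radius `r`.
-/

open Metric
open scoped NNReal

section

variable {E F : Type*} [NormedAddCommGroup E] [NormedSpace ℝ E]
  [NormedAddCommGroup F] [NormedSpace ℝ F]

theorem Convex.approximatesLinearOn_of_hasFDerivWithinAt {f : E → F} {f' : E → E →L[ℝ] F}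
    {A : E →L[ℝ] F} {s : Set E} {c : ℝ≥0} (hs : Convex ℝ s)
    (hf : ∀ x ∈ s, HasFDerivWithinAt f (f' x) s x) (bound : ∀ x ∈ s, ‖f' x - A‖ ≤ c) :
    ApproximatesLinearOn f A s c := fun _ hx _ hy =>
  hs.norm_image_sub_le_of_norm_hasFDerivWithin_le' hf bound hy hx

def ContinuousLinearEquiv.toNonlinearRightInverseOfLeMul (e : E ≃L[ℝ] F) (C : ℝ)
    (he : ∀ x, ‖x‖ ≤ C * ‖e x‖) : (e : E →L[ℝ] F).NonlinearRightInverse where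
  toFun := e.symm
  nnnorm := C.toNNReal
  bound' y := by
    calc ‖e.symm y‖ ≤ C * ‖e (e.symm y)‖ := he _
      _ ≤ C.toNNReal * ‖y‖ := by
        rw [e.apply_symm_apply]
        gcongr
        exact C.le_coe_toNNReal
  right_inv' := e.apply_symm_apply

theorem ball_subset_image_ball_of_norm_hasFDerivAt_sub_le [CompleteSpace E] {f : E → F}
    {f' : E → E →L[ℝ] F} (e : E ≃L[ℝ] F) {a : E} {C K r : ℝ} (hC : 0 < C) (hK : 0 ≤ K)
    (he : ∀ x, ‖x‖ ≤ C * ‖e x‖) (hf : ∀ y ∈ ball a r, HasFDerivAt f (f' y) y)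
    (hf' : ∀ y ∈ ball a r, ‖f' y - e‖ ≤ K * dist y a) (hr : 2 * C * K * r ≤ 1) :
    ball (f a) (r / (2 * C)) ⊆ f '' ball a r := by
  intro z hz
  set ε := 2 * C * dist z (f a) with hε
  have hε0 : 0 ≤ ε := by positivity
  have hεr : ε < r := (lt_div_iff₀' (by positivity)).1 (mem_ball.1 hz)
  have hball : closedBall a ε ⊆ ball a r := closedBall_subset_ball hεr
  have happrox : ApproximatesLinearOn f (e : E →L[ℝ] F) (closedBall a ε) ⟨K * ε, by positivity⟩ :=
    (convex_closedBall a ε).approximatesLinearOn_of_hasFDerivWithinAt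
      (fun y hy => (hf y (hball hy)).hasFDerivWithinAt)
      (fun y hy => (hf' y (hball hy)).trans (mul_le_mul_of_nonneg_left hy hK))
  have hKε : K * ε ≤ (2 * C)⁻¹ := by
    calc K * ε ≤ K * r := mul_le_mul_of_nonneg_left hεr.le hK
      _ ≤ (2 * C)⁻¹ := by
        rw [← one_div, le_div_iff₀' (by positivity)]
        linarith
  have hz' : z ∈ closedBall (f a)
      (((e.toNonlinearRightInverseOfLeMul C he).nnnorm⁻¹ - K * ε) * ε) := by
    have hN : ((e.toNonlinearRightInverseOfLeMul C he).nnnorm : ℝ) = C :=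
      Real.coe_toNNReal C hC.le
    rw [mem_closedBall, NNReal.coe_inv, hN]
    calc dist z (f a) = (2 * C)⁻¹ * ε := by rw [hε]; field_simp
      _ ≤ (C⁻¹ - K * ε) * ε := by
        gcongr
        linarith [show (2 * C)⁻¹ + (2 * C)⁻¹ = C⁻¹ by ring]
  obtain ⟨y, hy, rfl⟩ := happrox.surjOn_closedBall_of_nonlinearRightInverse
    (e.toNonlinearRightInverseOfLeMul C he) hε0 le_rfl hz'
  exact ⟨y, hball hy, rfl⟩

end

theorem stmt_7_general {B B' : Type*} [NormedAddCommGroup B] [NormedSpace ℝ B]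
    [NormedAddCommGroup B'] [NormedSpace ℝ B']
    [CompleteSpace B]
    (F : B → B') (hF : ContDiff ℝ 1 F)
    (CI CN r₁ : ℝ) (hCI : 0 < CI) (hCN : 0 < CN)
    (e : B ≃L[ℝ] B') (he : (e : B →L[ℝ] B') = fderiv ℝ F 0)
    (hinj : ∀ x : B, (1 / CI) * ‖x‖ ≤ ‖fderiv ℝ F 0 x‖)
    (hN : ∀ x y : B, ‖y‖ < r₁ →
      ‖fderiv ℝ F 0 x - fderiv ℝ F y x‖ ≤ CN * ‖x‖ * ‖y‖) :
    ∀ r : ℝ, 0 < r → r ≤ min r₁ (2 * CI * CN)⁻¹ →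
      Metric.ball (F 0) (r / (2 * CI)) ⊆ F '' Metric.ball 0 r ∧
      (‖F 0‖ < r / (2 * CI) → ∃ y : B, ‖y‖ < r ∧ F y = 0) := by
  intro r hr hrle
  have hdiff : Differentiable ℝ F := hF.differentiable one_ne_zero
  have hfe : ∀ y ∈ ball (0 : B) r, ‖fderiv ℝ F y - e‖ ≤ CN * dist y 0 := by
    intro y hy
    refine ContinuousLinearMap.opNorm_le_bound _ (by positivity) fun x => ?_
    rw [he, sub_apply, norm_sub_rev, dist_zero_right, mul_right_comm]
    exact hN x y ((mem_ball_zero_iff.1 hy).trans_le (hrle.trans (min_le_left _ _)))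
  have hinj' : ∀ x, ‖x‖ ≤ CI * ‖e x‖ := fun x => by
    have hx := hinj x
    rwa [← he, ContinuousLinearEquiv.coe_coe, one_div, inv_mul_le_iff₀ hCI] at hx
  have hr' : 2 * CI * CN * r ≤ 1 := by
    have h := hrle.trans (min_le_right _ _)
    rwa [← one_div, le_div_iff₀' (by positivity)] at h
  have key := ball_subset_image_ball_of_norm_hasFDerivAt_sub_le e hCI hCN.le hinj'
    (fun y _ => (hdiff y).hasFDerivAt) hfe hr'
  refine ⟨key, fun hF0 => ?_⟩
  obtain ⟨y, hy, hFy⟩ := key (mem_ball.2 (by rwa [dist_zero_left]))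
  exact ⟨y, mem_ball_zero_iff.1 hy, hFy⟩

/-- Quantitative inverse function theorem: if `F : B → B'` is `C¹`, `DF(0)` is an
isomorphism with injectivity constant `C_I`, and the derivative satisfies the
nonlinear estimate with constant `C_N` on the ball of radius `r₁`, then for
`r ≤ min(r₁, (2C_I C_N)⁻¹)` the ball of radius `r/(2C_I)` around `F(0)` is
contained in `F(B_r(0))`; in particular if `‖F 0‖ < r/(2C_I)` there is a zero
`y` of `F` with `‖y‖ < r`. -/
theorem stmt_7 {B B' : Type*} [NormedAddCommGroup B] [NormedSpace ℝ B]
    [NormedAddCommGroup B'] [NormedSpace ℝ B']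
    [CompleteSpace B] [CompleteSpace B']
    (F : B → B') (hF : ContDiff ℝ 1 F)
    (CI CN r₁ : ℝ) (hCI : 0 < CI) (hCN : 0 < CN) (hr₁ : 0 < r₁)
    (e : B ≃L[ℝ] B') (he : (e : B →L[ℝ] B') = fderiv ℝ F 0)
    (hinj : ∀ x : B, (1 / CI) * ‖x‖ ≤ ‖fderiv ℝ F 0 x‖)
    (hN : ∀ x y : B, ‖y‖ < r₁ →
      ‖fderiv ℝ F 0 x - fderiv ℝ F y x‖ ≤ CN * ‖x‖ * ‖y‖) :
    ∀ r : ℝ, 0 < r → r ≤ min r₁ (2 * CI * CN)⁻¹ →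
      Metric.ball (F 0) (r / (2 * CI)) ⊆ F '' Metric.ball 0 r ∧
      (‖F 0‖ < r / (2 * CI) → ∃ y : B, ‖y‖ < r ∧ F y = 0) :=
  stmt_7_general F hF CI CN r₁ hCI hCN e he hinj hN
end
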